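/- Let ρ be a locally finite positive Borel measure on ℝ whose support is bounded from below. Define, for q ∈ ℝ, F(q) = π^{-1/2} ∫_{(1,∞)} E⁻¹ e^{-(q-√E)²} dρ(E) − 2π^{-3/2} ∫₁^∞ e^{-(q-k)²} dk, where the first integral is allowed to take the value +∞. If ∫₀^∞ F(q)² dq < ∞, then ∫_ℝ (1+E²)⁻¹ dρ(E) < ∞. -/

import Mathlib

/-!
Write `G(q)` for the Gaussian integral against `ρ` and `K(q) = ∫₁^∞ e^{-(q-k)²} dk ∈ [0, √π]`.
Since `F = π^{-1/2} G - 2π^{-3/2} K`, AM–GM gives `w G ≤ π w² + 2w/√π + F²` for every weight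
`w ≥ 0`. For the Cauchy weight `w(q) = (1+q²)⁻¹`, which is integrable together with its square,
this makes `∫₀^∞ w G` finite. By Tonelli this integral equals
`∫_{E>1} E⁻¹ ∫₀^∞ w(q) e^{-(q-√E)²} dq dρ(E)`, and on `q ∈ (√E, √E+1]` the inner integrand is
at least `(5eE)⁻¹`, so `∫_{E>1} E⁻² dρ < ∞`. The part `E ≤ 1` is finite because `ρ` is
locally finite and vanishes below `a`.
-/

open MeasureTheory Set
open scoped ENNReal

/-- The (possibly infinite) integral `∫_{(1,∞)} E⁻¹ e^{-(q-√E)²} dρ(E)`. -/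
noncomputable def gaussPart (ρ : Measure ℝ) (q : ℝ) : ℝ≥0∞ :=
  ∫⁻ E in Ioi (1 : ℝ), ENNReal.ofReal (E⁻¹ * Real.exp (-(q - Real.sqrt E) ^ 2)) ∂ρ

/-- The square `F(q)²` of
`F(q) = π^{-1/2} ∫_{(1,∞)} E⁻¹ e^{-(q-√E)²} dρ(E) − 2π^{-3/2} ∫₁^∞ e^{-(q-k)²} dk`,
interpreted as `+∞` when the first integral is `+∞`. -/
noncomputable def Fsq (ρ : Measure ℝ) (q : ℝ) : ℝ≥0∞ :=
  if gaussPart ρ q = ⊤ then ⊤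
  else
    ENNReal.ofReal
      (((Real.sqrt Real.pi)⁻¹ * (gaussPart ρ q).toReal -
          2 * Real.pi ^ (-(3 : ℝ) / 2) * ∫ k in Ioi (1 : ℝ), Real.exp (-(q - k) ^ 2)) ^ 2)

lemma mul_le_sq_add_div_add_sq {s w G K : ℝ} (hs : 0 < s) (hw : 0 ≤ w) (hK : K ≤ s) :
    w * G ≤ s ^ 2 * w ^ 2 + 2 * w / s + (s⁻¹ * G - 2 * (s ^ 3)⁻¹ * K) ^ 2 := by
  set F := s⁻¹ * G - 2 * (s ^ 3)⁻¹ * K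
  have hG : G = s * F + 2 * K / s ^ 2 := by simp only [F]; field_simp; ring
  have hKw : 2 * w * K / s ^ 2 ≤ 2 * w / s := by
    rw [div_le_div_iff₀ (by positivity) hs]; nlinarith [mul_le_mul_of_nonneg_left hK hw]
  have hAMGM : s * w * F ≤ s ^ 2 * w ^ 2 + F ^ 2 := by
    nlinarith [sq_nonneg (s * w - F), sq_nonneg (s * w), sq_nonneg F]
  calc w * G = s * w * F + 2 * w * K / s ^ 2 := by rw [hG]; ring
    _ ≤ _ := by linarith

lemma pi_rpow_neg_three_halves : Real.pi ^ (-(3 : ℝ) / 2) = (Real.sqrt Real.pi ^ 3)⁻¹ := by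
  rw [Real.sqrt_eq_rpow, ← Real.rpow_natCast, ← Real.rpow_mul Real.pi_pos.le,
    ← Real.rpow_neg Real.pi_pos.le]
  norm_num

lemma setIntegral_exp_neg_sq_sub_le (s : Set ℝ) (q : ℝ) :
    ∫ k in s, Real.exp (-(q - k) ^ 2) ≤ Real.sqrt Real.pi := by
  have hgauss : Integrable (fun x : ℝ => Real.exp (-x ^ 2)) := by
    simpa using integrable_exp_neg_mul_sq one_pos
  calc ∫ k in s, Real.exp (-(q - k) ^ 2)
      ≤ ∫ k, Real.exp (-(q - k) ^ 2) :=
        setIntegral_le_integral (hgauss.comp_sub_left q) (.of_forall fun _ => (Real.exp_pos _).le)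
    _ = Real.sqrt Real.pi := by
        rw [integral_sub_left_eq_self (fun x => Real.exp (-x ^ 2))]
        simpa using integral_gaussian 1

lemma ofReal_mul_gaussPart_le (ρ : Measure ℝ) (q : ℝ) {w : ℝ} (hw : 0 ≤ w) :
    ENNReal.ofReal w * gaussPart ρ q ≤
      ENNReal.ofReal (Real.pi * w ^ 2 + 2 * w / Real.sqrt Real.pi) + Fsq ρ q := by
  by_cases htop : gaussPart ρ q = ⊤
  · simp [Fsq, htop]
  have key := mul_le_sq_add_div_add_sq (Real.sqrt_pos.2 Real.pi_pos) hw
    (setIntegral_exp_neg_sq_sub_le (Ioi 1) q) (G := (gaussPart ρ q).toReal)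
  rw [Real.sq_sqrt Real.pi_pos.le, ← pi_rpow_neg_three_halves] at key
  conv_lhs => rw [← ENNReal.ofReal_toReal htop, ← ENNReal.ofReal_mul hw]
  rw [Fsq, if_neg htop, ← ENNReal.ofReal_add (by positivity) (sq_nonneg _)]
  exact ENNReal.ofReal_le_ofReal key

lemma lintegral_mul_gaussPart (ρ : Measure ℝ) [SFinite ρ] (s : Set ℝ) {f : ℝ → ℝ≥0∞}
    (hf : Measurable f) :
    ∫⁻ q in s, f q * gaussPart ρ q =
      ∫⁻ E in Ioi 1,
        (∫⁻ q in s, f q * ENNReal.ofReal (E⁻¹ * Real.exp (-(q - Real.sqrt E) ^ 2))) ∂ρ := by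
  have hpull (q : ℝ) : f q * gaussPart ρ q = ∫⁻ E in Ioi 1,
      f q * ENNReal.ofReal (E⁻¹ * Real.exp (-(q - Real.sqrt E) ^ 2)) ∂ρ :=
    (lintegral_const_mul _ (by fun_prop)).symm
  simp only [hpull]
  have hmeas : Measurable (Function.uncurry fun q E : ℝ =>
      f q * ENNReal.ofReal (E⁻¹ * Real.exp (-(q - Real.sqrt E) ^ 2))) := by fun_prop
  exact lintegral_lintegral_swap hmeas.aemeasurable

lemma inv_sq_le_lintegral_weighted_kernel {E : ℝ} (hE : 1 ≤ E) :
    ENNReal.ofReal (E ^ 2)⁻¹ ≤ ENNReal.ofReal (5 * Real.exp 1) *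
      ∫⁻ q in Ioi 0, ENNReal.ofReal (1 + q ^ 2)⁻¹ *
        ENNReal.ofReal (E⁻¹ * Real.exp (-(q - Real.sqrt E) ^ 2)) := by
  set c := Real.sqrt E
  have hc : 1 ≤ c := Real.one_le_sqrt.2 hE
  have hcE : c ^ 2 = E := Real.sq_sqrt (by linarith)
  have hbound : ∀ q ∈ Ioc c (c + 1), ENNReal.ofReal ((E ^ 2)⁻¹ / (5 * Real.exp 1)) ≤
      ENNReal.ofReal (1 + q ^ 2)⁻¹ * ENNReal.ofReal (E⁻¹ * Real.exp (-(q - c) ^ 2)) := by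
    rintro q ⟨hcq, hqc⟩
    have hweight : (5 * E)⁻¹ ≤ (1 + q ^ 2)⁻¹ := by
      apply inv_anti₀ (by positivity); nlinarith
    have hgauss : (Real.exp 1)⁻¹ ≤ Real.exp (-(q - c) ^ 2) := by
      rw [← Real.exp_neg]; apply Real.exp_le_exp.2; nlinarith
    rw [← ENNReal.ofReal_mul (by positivity)]
    apply ENNReal.ofReal_le_ofReal
    calc (E ^ 2)⁻¹ / (5 * Real.exp 1) = (5 * E)⁻¹ * (E⁻¹ * (Real.exp 1)⁻¹) := by
          field_simp
      _ ≤ _ := by gcongr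
  calc ENNReal.ofReal (E ^ 2)⁻¹
      = ENNReal.ofReal (5 * Real.exp 1) * ∫⁻ _ in Ioc c (c + 1),
          ENNReal.ofReal ((E ^ 2)⁻¹ / (5 * Real.exp 1)) := by
        rw [setLIntegral_const, Real.volume_Ioc, add_sub_cancel_left, ENNReal.ofReal_one, mul_one,
          ← ENNReal.ofReal_mul (by positivity)]
        congr 1; field_simp
    _ ≤ ENNReal.ofReal (5 * Real.exp 1) * ∫⁻ q in Ioc c (c + 1), ENNReal.ofReal (1 + q ^ 2)⁻¹ *
          ENNReal.ofReal (E⁻¹ * Real.exp (-(q - c) ^ 2)) :=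
        mul_le_mul_right (setLIntegral_mono (by fun_prop) hbound) _
    _ ≤ _ := by
        gcongr
        intro q hq
        exact lt_trans (by linarith) hq.1

lemma integrable_inv_one_add_sq_sq : Integrable fun x : ℝ => ((1 + x ^ 2)⁻¹) ^ 2 := by
  refine integrable_inv_one_add_sq.mono' (by fun_prop) (.of_forall fun x => ?_)
  have hpos : 0 < (1 + x ^ 2)⁻¹ := by positivity
  have hle : (1 + x ^ 2)⁻¹ ≤ 1 := inv_le_one_of_one_le₀ (by nlinarith)
  rw [Real.norm_eq_abs, abs_of_nonneg (by positivity)]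
  nlinarith

lemma lintegral_weighted_gaussPart_lt_top (ρ : Measure ℝ)
    (hF : (∫⁻ q in Ioi (0 : ℝ), Fsq ρ q) < ⊤) :
    ∫⁻ q in Ioi 0, ENNReal.ofReal (1 + q ^ 2)⁻¹ * gaussPart ρ q < ⊤ :=
  calc ∫⁻ q in Ioi 0, ENNReal.ofReal (1 + q ^ 2)⁻¹ * gaussPart ρ q
      ≤ ∫⁻ q in Ioi 0, (ENNReal.ofReal (Real.pi * ((1 + q ^ 2)⁻¹) ^ 2 +
          2 * (1 + q ^ 2)⁻¹ / Real.sqrt Real.pi) + Fsq ρ q) :=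
        lintegral_mono fun q => ofReal_mul_gaussPart_le ρ q (by positivity)
    _ = (∫⁻ q in Ioi 0, ENNReal.ofReal (Real.pi * ((1 + q ^ 2)⁻¹) ^ 2 +
          2 * (1 + q ^ 2)⁻¹ / Real.sqrt Real.pi)) + ∫⁻ q in Ioi 0, Fsq ρ q :=
        lintegral_add_left (by fun_prop : Measurable fun q : ℝ => ENNReal.ofReal
          (Real.pi * ((1 + q ^ 2)⁻¹) ^ 2 + 2 * (1 + q ^ 2)⁻¹ / Real.sqrt Real.pi)) _
    _ < ⊤ := by
        refine ENNReal.add_lt_top.2 ⟨Integrable.lintegral_lt_top (Integrable.integrableOn ?_), hF⟩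
        exact (integrable_inv_one_add_sq_sq.const_mul _).add
          ((integrable_inv_one_add_sq.const_mul 2).div_const _)

lemma setLIntegral_Ioi_one_inv_one_add_sq_lt_top (ρ : Measure ℝ) [SFinite ρ]
    (hF : (∫⁻ q in Ioi (0 : ℝ), Fsq ρ q) < ⊤) :
    ∫⁻ E in Ioi 1, ENNReal.ofReal (1 + E ^ 2)⁻¹ ∂ρ < ⊤ :=
  calc ∫⁻ E in Ioi 1, ENNReal.ofReal (1 + E ^ 2)⁻¹ ∂ρ
      ≤ ∫⁻ E in Ioi 1, ENNReal.ofReal (5 * Real.exp 1) * (∫⁻ q in Ioi 0,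
          ENNReal.ofReal (1 + q ^ 2)⁻¹ *
            ENNReal.ofReal (E⁻¹ * Real.exp (-(q - Real.sqrt E) ^ 2))) ∂ρ := by
        refine setLIntegral_mono' measurableSet_Ioi fun E (hE : 1 < E) => ?_
        refine le_trans (ENNReal.ofReal_le_ofReal ?_) (inv_sq_le_lintegral_weighted_kernel hE.le)
        exact inv_anti₀ (by positivity) (by linarith)
    _ = ENNReal.ofReal (5 * Real.exp 1) *
          ∫⁻ q in Ioi 0, ENNReal.ofReal (1 + q ^ 2)⁻¹ * gaussPart ρ q := by
        rw [lintegral_const_mul' _ _ ENNReal.ofReal_ne_top,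
          lintegral_mul_gaussPart ρ _ (by fun_prop)]
    _ < ⊤ := ENNReal.mul_lt_top ENNReal.ofReal_lt_top (lintegral_weighted_gaussPart_lt_top ρ hF)

lemma measure_Iic_lt_top_of_measure_Iio_eq_zero {ρ : Measure ℝ} [IsLocallyFiniteMeasure ρ] {a : ℝ}
    (h : ρ (Iio a) = 0) (b : ℝ) : ρ (Iic b) < ⊤ :=
  calc ρ (Iic b) ≤ ρ (Iio a ∪ Icc a b) := measure_mono Iic_subset_Iio_union_Icc
    _ ≤ ρ (Iio a) + ρ (Icc a b) := measure_union_le _ _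
    _ < ⊤ := by rw [h, zero_add]; exact isCompact_Icc.measure_lt_top

/-- Let `ρ` be a locally finite positive Borel measure on `ℝ` whose support
is bounded from below.  If `∫₀^∞ F(q)² dq < ∞`, then `∫_ℝ (1+E²)⁻¹ dρ(E) < ∞`. -/
theorem stmt_7 (ρ : Measure ℝ) [IsLocallyFiniteMeasure ρ]
    (a : ℝ) (hsupp : ρ (Iio a) = 0)
    (hF : (∫⁻ q in Ioi (0 : ℝ), Fsq ρ q) < ⊤) :
    (∫⁻ E : ℝ, ENNReal.ofReal ((1 + E ^ 2)⁻¹) ∂ρ) < ⊤ := by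
  rw [← lintegral_add_compl _ (measurableSet_Iic (a := (1 : ℝ))), compl_Iic]
  refine ENNReal.add_lt_top.2 ⟨?_, setLIntegral_Ioi_one_inv_one_add_sq_lt_top ρ hF⟩
  calc ∫⁻ E in Iic 1, ENNReal.ofReal (1 + E ^ 2)⁻¹ ∂ρ ≤ ∫⁻ _ in Iic 1, 1 ∂ρ :=
        lintegral_mono fun E => ENNReal.ofReal_le_one.2 (inv_le_one_of_one_le₀ (by nlinarith))
    _ = ρ (Iic 1) := setLIntegral_one _
    _ < ⊤ := measure_Iic_lt_top_of_measure_Iio_eq_zero hsupp 1
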